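/- arXiv:2205.10644 — 4 statements merged into one kernel-verified Lean document; each statement's English description precedes it below -/
import Mathlib

section
/- Any p-morphic image of a finite partially ordered Kripke frame is a partially ordered frame: if (W, ≤) is a finite poset and p : W → U is a surjective p-morphism onto a frame (U, S) with S a preorder, then S is antisymmetric. -/
/-- Any p-morphic image of a finite partially ordered Kripke frame is a
partial order: if `(W, ≤)` is a finite poset and `p : W → U` is a surjective
p-morphism onto a frame with preorder `S`, then `S` is antisymmetric. -/
theorem finite_poset_pmorphic_image {W U : Type*} [Finite W] [PartialOrder W]
    (S : U → U → Prop) (Srefl : ∀ u, S u u)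
    (Strans : ∀ ⦃a b c⦄, S a b → S b c → S a c)
    (p : W → U) (hsurj : Function.Surjective p)
    (hforward : ∀ ⦃w v : W⦄, w ≤ v → S (p w) (p v))
    (hback : ∀ (w : W) (a : U), S (p w) a → ∃ v, w ≤ v ∧ p v = a) :
    ∀ a b : U, S a b → S b a → a = b := by
  intro a b hab hba
  by_contra hne
  obtain ⟨w0, hw0⟩ := hsurj a
  have key : ∀ w : W, (p w = a ∨ p w = b) →
      ∃ v, w < v ∧ (p v = a ∨ p v = b) := by
    intro w hw
    rcases hw with h | h
    · obtain ⟨v, hle, hpv⟩ := hback w b (h ▸ hab)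
      refine ⟨v, lt_of_le_of_ne hle ?_, Or.inr hpv⟩
      rintro rfl; exact hne (h ▸ hpv ▸ rfl)
    · obtain ⟨v, hle, hpv⟩ := hback w a (h ▸ hba)
      refine ⟨v, lt_of_le_of_ne hle ?_, Or.inl hpv⟩
      rintro rfl; exact hne (hpv ▸ h ▸ rfl)
  let g : {w : W // p w = a ∨ p w = b} → {w : W // p w = a ∨ p w = b} :=
    fun x => ⟨(key x.1 x.2).choose, (key x.1 x.2).choose_spec.2⟩
  let f : ℕ → {w : W // p w = a ∨ p w = b} := fun n =>
    Nat.rec ⟨w0, Or.inl hw0⟩ (fun _ x => g x) n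
  have hmono : StrictMono fun n => (f n).1 := by
    apply strictMono_nat_of_lt_succ
    intro n
    exact (key (f n).1 (f n).2).choose_spec.1
  exact not_injective_infinite_finite _ hmono.injective
end

section
/- Let M = (W, R, w₀, V) be a Kripke n-model such that the set of theories {Th((M)_w) : w ∈ W} of its generated submodels is finite. Then the relation w B v defined by Th((M)_w) = Th((M)_v) is the greatest bisimulation of the n-model M. -/
/-- Intuitionistic propositional formulas over variables `x₁, …, xₙ`. -/
inductive Form (n : ℕ) : Type
  | var : Fin n → Form n
  | bot : Form n
  | impl : Form n → Form n → Form n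
  | conj : Form n → Form n → Form n
  | disj : Form n → Form n → Form n

/-- An intuitionistic Kripke `n`-model: a preorder `R` on `W` with root `w₀`
and a monotone valuation `V : W → Finset (Fin n)`. -/
structure KModel (n : ℕ) where
  W : Type
  R : W → W → Prop
  refl : ∀ w, R w w
  trans : ∀ ⦃a b c⦄, R a b → R b c → R a c
  root : W
  rooted : ∀ w, R root w
  V : W → Finset (Fin n)
  mono : ∀ ⦃u w⦄, R u w → V u ⊆ V w

/-- The standard intuitionistic Kripke forcing relation. -/
def Forces {n : ℕ} (M : KModel n) : M.W → Form n → Prop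
  | w, Form.var i => i ∈ M.V w
  | _, Form.bot => False
  | w, Form.impl A B => ∀ u, M.R w u → Forces M u A → Forces M u B
  | w, Form.conj A B => Forces M w A ∧ Forces M w B
  | w, Form.disj A B => Forces M w A ∨ Forces M w B

/-- `B` is a bisimulation of the frame `(W, R)`: for related points the
zig-zag (back-and-forth) conditions hold. -/
def IsBisim {W : Type*} (R B : W → W → Prop) : Prop :=
  ∀ ⦃w v⦄, B w v →
    (∀ w', R w w' → ∃ v', R v v' ∧ B w' v') ∧
    (∀ v', R v v' → ∃ w', R w w' ∧ B w' v')

/-- A bisimulation of an `n`-model: a frame bisimulation which moreover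
relates only points with equal valuations. -/
def IsModelBisim {n : ℕ} (M : KModel n) (B : M.W → M.W → Prop) : Prop :=
  IsBisim M.R B ∧ ∀ w v : M.W, B w v → M.V w = M.V v

/-- The theory of the submodel of `M` generated by `w`: the set of formulas
forced at `w`. -/
def KTheory {n : ℕ} (M : KModel n) (w : M.W) : Set (Form n) :=
  {A | Forces M w A}

/-- Finite conjunction of a list of formulas. -/
def conjL (n : ℕ) : List (Form n) → Form n
  | [] => Form.impl Form.bot Form.bot
  | a :: l => Form.conj a (conjL n l)

/-- Finite disjunction of a list of formulas. -/
def disjL (n : ℕ) : List (Form n) → Form n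
  | [] => Form.bot
  | a :: l => Form.disj a (disjL n l)

lemma forces_conjL {n : ℕ} (M : KModel n) (w : M.W) :
    ∀ l : List (Form n), Forces M w (conjL n l) ↔ ∀ a ∈ l, Forces M w a
  | [] => by simp [conjL, Forces]
  | a :: l => by simp [conjL, Forces, forces_conjL M w l]

lemma forces_disjL {n : ℕ} (M : KModel n) (w : M.W) :
    ∀ l : List (Form n), Forces M w (disjL n l) ↔ ∃ a ∈ l, Forces M w a
  | [] => by simp [disjL, Forces]
  | a :: l => by simp [disjL, Forces, forces_disjL M w l]

lemma bisim_forces {n : ℕ} (M : KModel n) (B : M.W → M.W → Prop)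
    (hB : IsModelBisim M B) (A : Form n) :
    ∀ w v : M.W, B w v → (Forces M w A ↔ Forces M v A) := by
  induction A with
  | var i =>
    intro w v h
    simp only [Forces, hB.2 w v h]
  | bot =>
    intro w v h
    simp [Forces]
  | impl A C ihA ihC =>
    intro w v h
    constructor
    · intro hw u hru hA
      obtain ⟨w', hw', hb⟩ := (hB.1 h).2 u hru
      exact (ihC w' u hb).mp (hw w' hw' ((ihA w' u hb).mpr hA))
    · intro hv u hru hA
      obtain ⟨v', hv', hb⟩ := (hB.1 h).1 u hru
      exact (ihC u v' hb).mpr (hv v' hv' ((ihA u v' hb).mp hA))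
  | conj A C ihA ihC =>
    intro w v h
    exact and_congr (ihA w v h) (ihC w v h)
  | disj A C ihA ihC =>
    intro w v h
    exact or_congr (ihA w v h) (ihC w v h)

lemma key {n : ℕ} (M : KModel n)
    (hfin : (Set.range fun w : M.W => KTheory M w).Finite) (w' : M.W) :
    ∃ χ ψ : Form n, Forces M w' χ ∧ ¬ Forces M w' ψ ∧
      ∀ u, Forces M u χ → ¬ Forces M u ψ → KTheory M u = KTheory M w' := by
  classical
  set t := KTheory M w' with ht
  set S1 : Set (Set (Form n)) :=
    {T | T ∈ Set.range (fun w : M.W => KTheory M w) ∧ ¬ t ⊆ T} with hS1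
  set S2 : Set (Set (Form n)) :=
    {T | T ∈ Set.range (fun w : M.W => KTheory M w) ∧ t ⊆ T ∧ t ≠ T} with hS2
  have h1 : S1.Finite := hfin.subset (fun T hT => hT.1)
  have h2 : S2.Finite := hfin.subset (fun T hT => hT.1)
  set f : Set (Form n) → Form n := fun T =>
    if h : ∃ φ, φ ∈ t ∧ φ ∉ T then Classical.choose h else Form.bot with hf
  set g : Set (Form n) → Form n := fun T =>
    if h : ∃ φ, φ ∈ T ∧ φ ∉ t then Classical.choose h else Form.bot with hg
  have hfspec : ∀ T ∈ S1, f T ∈ t ∧ f T ∉ T := by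
    intro T hT
    have hex : ∃ φ, φ ∈ t ∧ φ ∉ T := Set.not_subset.mp hT.2
    simp only [hf, dif_pos hex]
    exact Classical.choose_spec hex
  have hgspec : ∀ T ∈ S2, g T ∈ T ∧ g T ∉ t := by
    intro T hT
    have hss : t ⊂ T := (Set.ssubset_iff_subset_ne).mpr ⟨hT.2.1, hT.2.2⟩
    obtain ⟨x, hxT, hxt⟩ := Set.exists_of_ssubset hss
    have hex : ∃ φ, φ ∈ T ∧ φ ∉ t := ⟨x, hxT, hxt⟩
    simp only [hg, dif_pos hex]
    exact Classical.choose_spec hex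
  refine ⟨conjL n (h1.toFinset.toList.map f), disjL n (h2.toFinset.toList.map g),
    ?_, ?_, ?_⟩
  · rw [forces_conjL]
    intro a ha
    obtain ⟨T, hT, rfl⟩ := List.mem_map.mp ha
    have hTS1 : T ∈ S1 := h1.mem_toFinset.mp ((Finset.mem_toList).mp hT)
    exact (hfspec T hTS1).1
  · rw [forces_disjL]
    rintro ⟨a, ha, hforce⟩
    obtain ⟨T, hT, rfl⟩ := List.mem_map.mp ha
    have hTS2 : T ∈ S2 := h2.mem_toFinset.mp ((Finset.mem_toList).mp hT)
    exact (hgspec T hTS2).2 hforce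
  · intro u hχ hψ
    have hsub : t ⊆ KTheory M u := by
      by_contra hns
      have hTS1 : KTheory M u ∈ S1 := ⟨⟨u, rfl⟩, hns⟩
      have hmem : f (KTheory M u) ∈ h1.toFinset.toList.map f :=
        List.mem_map.mpr ⟨KTheory M u, (Finset.mem_toList).mpr (h1.mem_toFinset.mpr hTS1), rfl⟩
      have : Forces M u (f (KTheory M u)) := (forces_conjL M u _).mp hχ _ hmem
      exact (hfspec _ hTS1).2 this
    have heq : t = KTheory M u := by
      by_contra hne
      have hTS2 : KTheory M u ∈ S2 := ⟨⟨u, rfl⟩, hsub, hne⟩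
      have hmem : g (KTheory M u) ∈ h2.toFinset.toList.map g :=
        List.mem_map.mpr ⟨KTheory M u, (Finset.mem_toList).mpr (h2.mem_toFinset.mpr hTS2), rfl⟩
      have : Forces M u (g (KTheory M u)) := (hgspec _ hTS2).1
      exact hψ ((forces_disjL M u _).mpr ⟨_, hmem, this⟩)
    exact heq.symm

lemma zigKT {n : ℕ} (M : KModel n)
    (hfin : (Set.range fun w : M.W => KTheory M w).Finite) :
    ∀ w v : M.W, KTheory M w = KTheory M v →
      ∀ w', M.R w w' → ∃ v', M.R v v' ∧ KTheory M w' = KTheory M v' := by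
  intro w v hth w' hr
  obtain ⟨χ, ψ, hχ, hψ, huniq⟩ := key M hfin w'
  have hnw : ¬ Forces M w (Form.impl χ ψ) := fun h => hψ (h w' hr hχ)
  have hmem : Forces M w (Form.impl χ ψ) ↔ Forces M v (Form.impl χ ψ) :=
    Set.ext_iff.mp hth (Form.impl χ ψ)
  have hnv : ¬ Forces M v (Form.impl χ ψ) := fun h => hnw (hmem.mpr h)
  simp only [Forces] at hnv
  push_neg at hnv
  obtain ⟨v', hrv, hχ', hψ'⟩ := hnv
  exact ⟨v', hrv, (huniq v' hχ' hψ').symm⟩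

/-- If the set of theories of generated submodels of `M` is finite, then
"having equal theories" is the greatest bisimulation of the `n`-model `M`. -/

theorem greatest_bisim {n : ℕ} (M : KModel n)
    (hfin : (Set.range fun w : M.W => KTheory M w).Finite) :
    IsModelBisim M (fun w v : M.W => KTheory M w = KTheory M v) ∧
    ∀ B : M.W → M.W → Prop, IsModelBisim M B →
      ∀ w v : M.W, B w v → KTheory M w = KTheory M v := by
  constructor
  · constructor
    · intro w v hth
      refine ⟨fun w' hr => zigKT M hfin w v hth w' hr, fun v' hr => ?_⟩
      obtain ⟨w', hrw, hth'⟩ := zigKT M hfin v w hth.symm v' hr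
      exact ⟨w', hrw, hth'.symm⟩
    · intro w v hth
      ext i
      have := Set.ext_iff.mp hth (Form.var i)
      simpa only [KTheory, Set.mem_setOf_eq, Forces] using this
  · intro B hB w v hwv
    ext A
    exact bisim_forces M B hB A w v hwv
end

section
/- In any intermediate logic L extending KC (the logic of weak excluded middle, axiomatized by ¬x ∨ ¬¬x), unification is filtering: if ε and σ are L-unifiers of a formula A(x₁,…,xₙ) with ε, σ : {x₁,…,xₙ} → Form k, then the substitution μ defined by μ(xᵢ) = (ε(xᵢ) ∧ ¬y) ∨ (σ(xᵢ) ∧ ¬¬y), where y is a fresh variable not in Form k, is an L-unifier of A that is more general than both ε and σ. -/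
/-- Intuitionistic propositional formulas over the variables `x₀, x₁, …`. -/
inductive Fml : Type
  | var : ℕ → Fml
  | bot : Fml
  | impl : Fml → Fml → Fml
  | conj : Fml → Fml → Fml
  | disj : Fml → Fml → Fml

/-- Negation `¬A := A → ⊥`. -/
def Fml.neg (A : Fml) : Fml := Fml.impl A Fml.bot

/-- Equivalence `A ↔ B := (A → B) ∧ (B → A)`. -/
def Fml.iff (A B : Fml) : Fml := Fml.conj (Fml.impl A B) (Fml.impl B A)

/-- Homomorphic extension of a substitution to formulas. -/
def Fml.subst (σ : ℕ → Fml) : Fml → Fml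
  | Fml.var i => σ i
  | Fml.bot => Fml.bot
  | Fml.impl A B => Fml.impl (A.subst σ) (B.subst σ)
  | Fml.conj A B => Fml.conj (A.subst σ) (B.subst σ)
  | Fml.disj A B => Fml.disj (A.subst σ) (B.subst σ)

/-- The variable `x` occurs in the formula. -/
def Fml.occurs (x : ℕ) : Fml → Prop
  | Fml.var y => x = y
  | Fml.bot => False
  | Fml.impl A B => A.occurs x ∨ B.occurs x
  | Fml.conj A B => A.occurs x ∨ B.occurs x
  | Fml.disj A B => A.occurs x ∨ B.occurs x

/-- A Hilbert-style axiomatization of intuitionistic propositional logic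
`INT`, with modus ponens as the only rule. -/
inductive IntProv : Fml → Prop
  | ax_k (A B) : IntProv (Fml.impl A (Fml.impl B A))
  | ax_s (A B C) :
      IntProv (Fml.impl (Fml.impl A (Fml.impl B C))
        (Fml.impl (Fml.impl A B) (Fml.impl A C)))
  | ax_and_left (A B) : IntProv (Fml.impl (Fml.conj A B) A)
  | ax_and_right (A B) : IntProv (Fml.impl (Fml.conj A B) B)
  | ax_and_intro (A B) : IntProv (Fml.impl A (Fml.impl B (Fml.conj A B)))
  | ax_or_left (A B) : IntProv (Fml.impl A (Fml.disj A B))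
  | ax_or_right (A B) : IntProv (Fml.impl B (Fml.disj A B))
  | ax_or_elim (A B C) :
      IntProv (Fml.impl (Fml.impl A C)
        (Fml.impl (Fml.impl B C) (Fml.impl (Fml.disj A B) C)))
  | ax_exfalso (A) : IntProv (Fml.impl Fml.bot A)
  | mp {A B} : IntProv (Fml.impl A B) → IntProv A → IntProv B

/-- An intermediate logic: a set of formulas containing `INT`, closed under
modus ponens and under substitution. -/
structure IntermediateLogic where
  thms : Set Fml
  int_sub : ∀ {A : Fml}, IntProv A → A ∈ thms
  mp : ∀ {A B : Fml}, Fml.impl A B ∈ thms → A ∈ thms → B ∈ thms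
  subst_closed : ∀ {A : Fml} (σ : ℕ → Fml), A ∈ thms → A.subst σ ∈ thms

/-- The consequence relation `X ⊢_L B` of an intermediate logic `L`, with
modus ponens as the only rule. -/
inductive Deriv (L : IntermediateLogic) (X : Set Fml) : Fml → Prop
  | thm {A} : A ∈ L.thms → Deriv L X A
  | hyp {A} : A ∈ X → Deriv L X A
  | mp {A B} : Deriv L X (Fml.impl A B) → Deriv L X A → Deriv L X B

-- auxiliary lemmas, to be inserted before kc_filtering

lemma Fml.subst_eq_self (σ : ℕ → Fml) :
    ∀ (F : Fml), (∀ y, F.occurs y → σ y = Fml.var y) → F.subst σ = F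
  | Fml.var i, h => h i rfl
  | Fml.bot, _ => rfl
  | Fml.impl A B, h => by
      simp [Fml.subst, Fml.subst_eq_self σ A fun y hy => h y (Or.inl hy),
        Fml.subst_eq_self σ B fun y hy => h y (Or.inr hy)]
  | Fml.conj A B, h => by
      simp [Fml.subst, Fml.subst_eq_self σ A fun y hy => h y (Or.inl hy),
        Fml.subst_eq_self σ B fun y hy => h y (Or.inr hy)]
  | Fml.disj A B, h => by
      simp [Fml.subst, Fml.subst_eq_self σ A fun y hy => h y (Or.inl hy),
        Fml.subst_eq_self σ B fun y hy => h y (Or.inr hy)]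

section DerivLemmas

variable {L : IntermediateLogic} {X Y : Set Fml} {A B C : Fml}

lemma Deriv.weaken (h : Deriv L X A) (hXY : X ⊆ Y) : Deriv L Y A := by
  induction h with
  | thm h => exact .thm h
  | hyp h => exact .hyp (hXY h)
  | mp _ _ ih1 ih2 => exact .mp ih1 ih2

lemma dwk (h : Deriv L X A) : Deriv L (insert B X) A :=
  h.weaken (Set.subset_insert _ _)

lemma daxm (h : IntProv A) : Deriv L X A := .thm (L.int_sub h)

lemma dI : Deriv L X (A.impl A) :=
  .mp (.mp (daxm (IntProv.ax_s A (A.impl A) A)) (daxm (IntProv.ax_k _ _)))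
    (daxm (IntProv.ax_k _ _))

lemma ded (h : Deriv L (insert A X) B) : Deriv L X (A.impl B) := by
  induction h with
  | thm h => exact .mp (daxm (.ax_k _ _)) (.thm h)
  | hyp h =>
    rcases Set.mem_insert_iff.mp h with rfl | h
    · exact dI
    · exact .mp (daxm (.ax_k _ _)) (.hyp h)
  | mp _ _ ih1 ih2 => exact .mp (.mp (daxm (.ax_s _ _ _)) ih1) ih2

lemma dandI (h1 : Deriv L X A) (h2 : Deriv L X B) : Deriv L X (A.conj B) :=
  .mp (.mp (daxm (.ax_and_intro _ _)) h1) h2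

lemma dandE1 (h : Deriv L X (A.conj B)) : Deriv L X A :=
  .mp (daxm (.ax_and_left _ _)) h

lemma dandE2 (h : Deriv L X (A.conj B)) : Deriv L X B :=
  .mp (daxm (.ax_and_right _ _)) h

lemma dorI1 (h : Deriv L X A) : Deriv L X (A.disj B) :=
  .mp (daxm (.ax_or_left _ _)) h

lemma dorI2 (h : Deriv L X B) : Deriv L X (A.disj B) :=
  .mp (daxm (.ax_or_right _ _)) h

lemma dorE (h : Deriv L X (A.disj B)) (h1 : Deriv L X (A.impl C))
    (h2 : Deriv L X (B.impl C)) : Deriv L X C :=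
  .mp (.mp (.mp (daxm (.ax_or_elim _ _ _)) h1) h2) h

lemma dexf (h : Deriv L X Fml.bot) : Deriv L X A :=
  .mp (daxm (.ax_exfalso _)) h

lemma diffI (h1 : Deriv L X (A.impl B)) (h2 : Deriv L X (B.impl A)) :
    Deriv L X (A.iff B) := dandI h1 h2

lemma diff_mp (h : Deriv L X (A.iff B)) : Deriv L X (A.impl B) := dandE1 h

lemma diff_mpr (h : Deriv L X (A.iff B)) : Deriv L X (B.impl A) := dandE2 h

lemma diff_refl : Deriv L X (A.iff A) := diffI dI dI

lemma dcongr_impl {A' B' : Fml} (h1 : Deriv L X (A.iff A'))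
    (h2 : Deriv L X (B.iff B')) : Deriv L X ((A.impl B).iff (A'.impl B')) := by
  apply diffI
  · apply ded; apply ded
    have hA' : Deriv L (insert A' (insert (A.impl B) X)) A' := .hyp (by simp)
    have hAB : Deriv L (insert A' (insert (A.impl B) X)) (A.impl B) := .hyp (by simp)
    exact .mp (dwk (dwk (diff_mp h2))) (.mp hAB (.mp (dwk (dwk (diff_mpr h1))) hA'))
  · apply ded; apply ded
    have hA : Deriv L (insert A (insert (A'.impl B') X)) A := .hyp (by simp)
    have hAB' : Deriv L (insert A (insert (A'.impl B') X)) (A'.impl B') := .hyp (by simp)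
    exact .mp (dwk (dwk (diff_mpr h2))) (.mp hAB' (.mp (dwk (dwk (diff_mp h1))) hA))

lemma dcongr_conj {A' B' : Fml} (h1 : Deriv L X (A.iff A'))
    (h2 : Deriv L X (B.iff B')) : Deriv L X ((A.conj B).iff (A'.conj B')) := by
  apply diffI
  · apply ded
    have h : Deriv L (insert (A.conj B) X) (A.conj B) := .hyp (by simp)
    exact dandI (.mp (dwk (diff_mp h1)) (dandE1 h)) (.mp (dwk (diff_mp h2)) (dandE2 h))
  · apply ded
    have h : Deriv L (insert (A'.conj B') X) (A'.conj B') := .hyp (by simp)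
    exact dandI (.mp (dwk (diff_mpr h1)) (dandE1 h)) (.mp (dwk (diff_mpr h2)) (dandE2 h))

lemma dcongr_disj {A' B' : Fml} (h1 : Deriv L X (A.iff A'))
    (h2 : Deriv L X (B.iff B')) : Deriv L X ((A.disj B).iff (A'.disj B')) := by
  apply diffI
  · apply ded
    refine dorE (Deriv.hyp (Set.mem_insert _ _)) ?_ ?_
    · exact ded (dorI1 (.mp (dwk (dwk (diff_mp h1))) (.hyp (by simp))))
    · exact ded (dorI2 (.mp (dwk (dwk (diff_mp h2))) (.hyp (by simp))))
  · apply ded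
    refine dorE (Deriv.hyp (Set.mem_insert _ _)) ?_ ?_
    · exact ded (dorI1 (.mp (dwk (dwk (diff_mpr h1))) (.hyp (by simp))))
    · exact ded (dorI2 (.mp (dwk (dwk (diff_mpr h2))) (.hyp (by simp))))

lemma dcongr_subst (P Q : ℕ → Fml) :
    ∀ (A : Fml), (∀ x, A.occurs x → Deriv L X ((P x).iff (Q x))) →
      Deriv L X ((A.subst P).iff (A.subst Q))
  | Fml.var i, h => h i rfl
  | Fml.bot, _ => diff_refl
  | Fml.impl A B, h =>
      dcongr_impl (dcongr_subst P Q A fun x hx => h x (Or.inl hx))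
        (dcongr_subst P Q B fun x hx => h x (Or.inr hx))
  | Fml.conj A B, h =>
      dcongr_conj (dcongr_subst P Q A fun x hx => h x (Or.inl hx))
        (dcongr_subst P Q B fun x hx => h x (Or.inr hx))
  | Fml.disj A B, h =>
      dcongr_disj (dcongr_subst P Q A fun x hx => h x (Or.inl hx))
        (dcongr_subst P Q B fun x hx => h x (Or.inr hx))

lemma dmu_eps (E S y : Fml) :
    Deriv L X (y.neg.impl ((Fml.disj (E.conj y.neg) (S.conj y.neg.neg)).iff E)) := by
  apply ded
  apply diffI
  · apply ded
    refine dorE (Deriv.hyp (Set.mem_insert _ _)) (daxm (.ax_and_left _ _)) ?_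
    apply ded
    refine dexf (Deriv.mp (dandE2 (Deriv.hyp (Set.mem_insert _ _))) ?_)
    exact Deriv.hyp (by simp [Fml.neg])
  · apply ded
    refine dorI1 (dandI (Deriv.hyp (Set.mem_insert _ _)) ?_)
    exact Deriv.hyp (by simp [Fml.neg])

lemma dmu_sigma (E S y : Fml) :
    Deriv L X (y.neg.neg.impl ((Fml.disj (E.conj y.neg) (S.conj y.neg.neg)).iff S)) := by
  apply ded
  apply diffI
  · apply ded
    refine dorE (Deriv.hyp (Set.mem_insert _ _)) ?_ (daxm (.ax_and_left _ _))
    apply ded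
    refine dexf (Deriv.mp (show Deriv L _ (Fml.impl y.neg Fml.bot) from
      Deriv.hyp (by simp [Fml.neg])) (dandE2 (Deriv.hyp (Set.mem_insert _ _))))
  · apply ded
    refine dorI2 (dandI (Deriv.hyp (Set.mem_insert _ _)) ?_)
    exact Deriv.hyp (by simp [Fml.neg])

lemma deriv_empty_mem {B : Fml} (h : Deriv L ∅ B) : B ∈ L.thms := by
  induction h with
  | thm h => exact h
  | hyp h => exact absurd h (Set.notMem_empty _)
  | mp _ _ ih1 ih2 => exact L.mp ih1 ih2

end DerivLemmas

/-- Unification in any intermediate logic `L ⊇ KC` is filtering: if `ε` and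
`σ` are `L`-unifiers of `A(x₁,…,xₙ)` taking values in formulas over
`x₁,…,x_k`, then `μ(xᵢ) = (ε(xᵢ) ∧ ¬y) ∨ (σ(xᵢ) ∧ ¬¬y)`, with `y` the fresh
variable `x_k`, is an `L`-unifier of `A` more general than both `ε` and `σ`. -/
theorem kc_filtering (L : IntermediateLogic)
    (hKC : Fml.disj (Fml.neg (Fml.var 0)) (Fml.neg (Fml.neg (Fml.var 0))) ∈ L.thms)
    (n k : ℕ) (A : Fml) (hA : ∀ x, A.occurs x → x < n)
    (ε σ μ : ℕ → Fml)
    (hεk : ∀ x, x < n → ∀ y, (ε x).occurs y → y < k)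
    (hσk : ∀ x, x < n → ∀ y, (σ x).occurs y → y < k)
    (hεu : A.subst ε ∈ L.thms) (hσu : A.subst σ ∈ L.thms)
    (hμ : ∀ x, μ x =
      Fml.disj (Fml.conj (ε x) (Fml.neg (Fml.var k)))
               (Fml.conj (σ x) (Fml.neg (Fml.neg (Fml.var k))))) :
    A.subst μ ∈ L.thms ∧
    (∃ α : ℕ → Fml, ∀ x, x < n → Fml.iff ((μ x).subst α) (ε x) ∈ L.thms) ∧
    (∃ β : ℕ → Fml, ∀ x, x < n → Fml.iff ((μ x).subst β) (σ x) ∈ L.thms) := by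
  constructor
  · -- μ is a unifier
    have hKCk : Fml.disj (Fml.neg (Fml.var k)) (Fml.neg (Fml.neg (Fml.var k))) ∈ L.thms := by
      have h := L.subst_closed (fun _ => Fml.var k) hKC
      simpa [Fml.subst, Fml.neg] using h
    apply deriv_empty_mem
    have d1 : Deriv L ∅ ((Fml.var k).neg.impl (A.subst μ)) := by
      apply ded
      have hiff : Deriv L (insert (Fml.var k).neg ∅) ((A.subst μ).iff (A.subst ε)) := by
        apply dcongr_subst
        intro x _
        rw [hμ x]
        exact Deriv.mp (dmu_eps (ε x) (σ x) (Fml.var k)) (Deriv.hyp (Set.mem_insert _ _))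
      exact .mp (diff_mpr hiff) (.thm hεu)
    have d2 : Deriv L ∅ ((Fml.var k).neg.neg.impl (A.subst μ)) := by
      apply ded
      have hiff : Deriv L (insert (Fml.var k).neg.neg ∅) ((A.subst μ).iff (A.subst σ)) := by
        apply dcongr_subst
        intro x _
        rw [hμ x]
        exact Deriv.mp (dmu_sigma (ε x) (σ x) (Fml.var k)) (Deriv.hyp (Set.mem_insert _ _))
      exact .mp (diff_mpr hiff) (.thm hσu)
    exact dorE (.thm hKCk) d1 d2
  constructor
  · -- more general than ε
    refine ⟨fun i => if i = k then Fml.bot else Fml.var i, fun x hx => ?_⟩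
    apply deriv_empty_mem
    have heq : (ε x).subst (fun i => if i = k then Fml.bot else Fml.var i) = ε x :=
      Fml.subst_eq_self _ _ fun y hy => by simp [Nat.ne_of_lt (hεk x hx y hy)]
    have hseq : (σ x).subst (fun i => if i = k then Fml.bot else Fml.var i) = σ x :=
      Fml.subst_eq_self _ _ fun y hy => by simp [Nat.ne_of_lt (hσk x hx y hy)]
    have hμeq : (μ x).subst (fun i => if i = k then Fml.bot else Fml.var i) =
        Fml.disj (Fml.conj (ε x) Fml.bot.neg) (Fml.conj (σ x) Fml.bot.neg.neg) := by
      rw [hμ x]; simp [Fml.subst, Fml.neg, heq, hseq]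
    rw [hμeq]
    exact Deriv.mp (dmu_eps (ε x) (σ x) Fml.bot) (daxm (IntProv.ax_exfalso Fml.bot))
  · -- more general than σ
    refine ⟨fun i => if i = k then Fml.impl Fml.bot Fml.bot else Fml.var i, fun x hx => ?_⟩
    apply deriv_empty_mem
    have heq : (ε x).subst (fun i => if i = k then Fml.impl Fml.bot Fml.bot else Fml.var i) = ε x :=
      Fml.subst_eq_self _ _ fun y hy => by simp [Nat.ne_of_lt (hεk x hx y hy)]
    have hseq : (σ x).subst (fun i => if i = k then Fml.impl Fml.bot Fml.bot else Fml.var i) = σ x :=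
      Fml.subst_eq_self _ _ fun y hy => by simp [Nat.ne_of_lt (hσk x hx y hy)]
    have hμeq : (μ x).subst (fun i => if i = k then Fml.impl Fml.bot Fml.bot else Fml.var i) =
        Fml.disj (Fml.conj (ε x) Fml.bot.neg.neg) (Fml.conj (σ x) Fml.bot.neg.neg.neg) := by
      rw [hμ x]; simp [Fml.subst, Fml.neg, heq, hseq]
    have hnn : Deriv L ∅ Fml.bot.neg.neg.neg :=
      ded (Deriv.mp (Deriv.hyp (Set.mem_insert _ _)) (daxm (IntProv.ax_exfalso Fml.bot)))
    rw [hμeq]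
    exact Deriv.mp (dmu_sigma (ε x) (σ x) Fml.bot.neg) hnn
end

section
/- If ε : Fin n → Form n is an L-projective unifier for a formula A in n variables (L an intermediate logic), then A =_L ⋀_{i=1}^{n} (xᵢ ↔ ε(xᵢ)), i.e., A and the conjunction of the equivalences are interderivable in L. -/
/-- The conjunction of a list of formulas (`⊤ := ⊥ → ⊥` for the empty list,
and the plain conjunction for nonempty lists). -/
def bigAnd : List Fml → Fml
  | [] => Fml.impl Fml.bot Fml.bot
  | [A] => A
  | A :: B :: rest => Fml.conj A (bigAnd (B :: rest))

theorem IntProv.id (A : Fml) : IntProv (Fml.impl A A) :=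
  .mp (.mp (.ax_s A (Fml.impl A A) A) (.ax_k A (Fml.impl A A))) (.ax_k A A)

namespace Deriv

variable {L : IntermediateLogic} {X : Set Fml} {A B C A' B' : Fml}

theorem ofInt (h : IntProv A) : Deriv L X A := .thm (L.int_sub h)

theorem weaken_s18 {Y : Set Fml} (hXY : X ⊆ Y) (h : Deriv L X A) : Deriv L Y A := by
  induction h with
  | thm h => exact .thm h
  | hyp h => exact .hyp (hXY h)
  | mp _ _ ih1 ih2 => exact .mp ih1 ih2

theorem dt (h : Deriv L (insert A X) B) : Deriv L X (Fml.impl A B) := by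
  induction h with
  | thm h => exact .mp (ofInt (.ax_k _ _)) (.thm h)
  | hyp h =>
    rcases h with rfl | h
    · exact ofInt (IntProv.id _)
    · exact .mp (ofInt (.ax_k _ _)) (.hyp h)
  | mp _ _ ih1 ih2 => exact .mp (.mp (ofInt (.ax_s _ _ _)) ih1) ih2

theorem andI (h1 : Deriv L X A) (h2 : Deriv L X B) : Deriv L X (Fml.conj A B) :=
  .mp (.mp (ofInt (.ax_and_intro _ _)) h1) h2

theorem andL (h : Deriv L X (Fml.conj A B)) : Deriv L X A :=
  .mp (ofInt (.ax_and_left _ _)) h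

theorem andR (h : Deriv L X (Fml.conj A B)) : Deriv L X B :=
  .mp (ofInt (.ax_and_right _ _)) h

theorem iffI (h1 : Deriv L X (Fml.impl A B)) (h2 : Deriv L X (Fml.impl B A)) :
    Deriv L X (Fml.iff A B) := andI h1 h2

theorem iff_mp (h : Deriv L X (Fml.iff A B)) : Deriv L X (Fml.impl A B) := andL h
theorem iff_mpr (h : Deriv L X (Fml.iff A B)) : Deriv L X (Fml.impl B A) := andR h

theorem iff_symm (h : Deriv L X (Fml.iff A B)) : Deriv L X (Fml.iff B A) :=
  iffI (iff_mpr h) (iff_mp h)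

theorem iff_refl : Deriv L X (Fml.iff A A) :=
  iffI (ofInt (IntProv.id _)) (ofInt (IntProv.id _))

theorem hyp_insert : Deriv L (insert A X) A := .hyp (Set.mem_insert _ _)

theorem weaken1 (h : Deriv L X B) : Deriv L (insert A X) B :=
  weaken_s18 (Set.subset_insert _ _) h

theorem impl_cong (h1 : Deriv L X (Fml.iff A A')) (h2 : Deriv L X (Fml.iff B B')) :
    Deriv L X (Fml.iff (Fml.impl A B) (Fml.impl A' B')) := by
  have dir : ∀ {A A' B B' : Fml}, Deriv L X (Fml.iff A A') → Deriv L X (Fml.iff B B') →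
      Deriv L X (Fml.impl (Fml.impl A B) (Fml.impl A' B')) := by
    intro A A' B B' h1 h2
    apply dt; apply dt
    have hA' : Deriv L (insert A' (insert (Fml.impl A B) X)) A' := hyp_insert
    have hAB : Deriv L (insert A' (insert (Fml.impl A B) X)) (Fml.impl A B) :=
      weaken1 hyp_insert
    have hA : Deriv L (insert A' (insert (Fml.impl A B) X)) A :=
      .mp (iff_mpr (weaken1 (weaken1 h1))) hA'
    exact .mp (iff_mp (weaken1 (weaken1 h2))) (.mp hAB hA)
  exact iffI (dir h1 h2) (dir (iff_symm h1) (iff_symm h2))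

theorem conj_cong (h1 : Deriv L X (Fml.iff A A')) (h2 : Deriv L X (Fml.iff B B')) :
    Deriv L X (Fml.iff (Fml.conj A B) (Fml.conj A' B')) := by
  have dir : ∀ {A A' B B' : Fml}, Deriv L X (Fml.iff A A') → Deriv L X (Fml.iff B B') →
      Deriv L X (Fml.impl (Fml.conj A B) (Fml.conj A' B')) := by
    intro A A' B B' h1 h2
    apply dt
    have h : Deriv L (insert (Fml.conj A B) X) (Fml.conj A B) := hyp_insert
    exact andI (.mp (iff_mp (weaken1 h1)) (andL h)) (.mp (iff_mp (weaken1 h2)) (andR h))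
  exact iffI (dir h1 h2) (dir (iff_symm h1) (iff_symm h2))

theorem disj_cong (h1 : Deriv L X (Fml.iff A A')) (h2 : Deriv L X (Fml.iff B B')) :
    Deriv L X (Fml.iff (Fml.disj A B) (Fml.disj A' B')) := by
  have dir : ∀ {A A' B B' : Fml}, Deriv L X (Fml.iff A A') → Deriv L X (Fml.iff B B') →
      Deriv L X (Fml.impl (Fml.disj A B) (Fml.disj A' B')) := by
    intro A A' B B' h1 h2
    have f : Deriv L X (Fml.impl A (Fml.disj A' B')) := by
      apply dt
      exact .mp (ofInt (.ax_or_left _ _)) (.mp (iff_mp (weaken1 h1)) hyp_insert)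
    have g : Deriv L X (Fml.impl B (Fml.disj A' B')) := by
      apply dt
      exact .mp (ofInt (.ax_or_right _ _)) (.mp (iff_mp (weaken1 h2)) hyp_insert)
    exact .mp (.mp (ofInt (.ax_or_elim _ _ _)) f) g
  exact iffI (dir h1 h2) (dir (iff_symm h1) (iff_symm h2))

theorem subst_iff {ε : ℕ → Fml} (B : Fml)
    (h : ∀ x, B.occurs x → Deriv L X (Fml.iff (Fml.var x) (ε x))) :
    Deriv L X (Fml.iff B (B.subst ε)) := by
  induction B with
  | var i => exact h i rfl
  | bot => exact iff_refl
  | impl P Q ihP ihQ =>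
    exact impl_cong (ihP fun x hx => h x (Or.inl hx)) (ihQ fun x hx => h x (Or.inr hx))
  | conj P Q ihP ihQ =>
    exact conj_cong (ihP fun x hx => h x (Or.inl hx)) (ihQ fun x hx => h x (Or.inr hx))
  | disj P Q ihP ihQ =>
    exact disj_cong (ihP fun x hx => h x (Or.inl hx)) (ihQ fun x hx => h x (Or.inr hx))

theorem bigAnd_intro : ∀ l : List Fml, (∀ B ∈ l, Deriv L X B) → Deriv L X (bigAnd l)
  | [], _ => ofInt (IntProv.id _)
  | [A], h => h A (by simp)
  | A :: B :: rest, h =>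
    andI (h A (by simp)) (bigAnd_intro (B :: rest) fun C hC => h C (by simp_all))

theorem bigAnd_elim : ∀ l : List Fml, Deriv L X (bigAnd l) → ∀ B ∈ l, Deriv L X B
  | [A], h, B, hB => by
    have : B = A := by simpa using hB
    subst this; exact h
  | A :: B :: rest, h, C, hC => by
    cases hC with
    | head => exact andL h
    | tail _ hC => exact bigAnd_elim (B :: rest) (andR h) C hC

end Deriv

/-- If `ε : Fin n → Form n` is an `L`-projective unifier for a formula `A`
in `n` variables, then `A =_L ⋀_{i=1}^{n} (xᵢ ↔ ε(xᵢ))`: the formula and the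
conjunction of equivalences are interderivable in `L`. -/
theorem projective_formula_characterization (L : IntermediateLogic) (n : ℕ)
    (A : Fml) (hA : ∀ x, A.occurs x → x < n)
    (ε : ℕ → Fml)
    (hε₁ : ∀ x : ℕ, n ≤ x → ε x = Fml.var x)
    (hε₂ : ∀ x : ℕ, x < n → ∀ y, (ε x).occurs y → y < n)
    (hεu : A.subst ε ∈ L.thms)
    (hproj : ∀ x : ℕ, x < n → Deriv L {A} (Fml.iff (ε x) (Fml.var x))) :
    Deriv L {A}
      (bigAnd (List.ofFn fun i : Fin n =>
        Fml.iff (Fml.var (i : ℕ)) (ε (i : ℕ)))) ∧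
    Deriv L
      {bigAnd (List.ofFn fun i : Fin n =>
        Fml.iff (Fml.var (i : ℕ)) (ε (i : ℕ)))} A := by
  constructor
  · apply Deriv.bigAnd_intro
    intro B hB
    rw [List.mem_ofFn] at hB
    obtain ⟨i, rfl⟩ := hB
    exact Deriv.iff_symm (hproj i i.isLt)
  · set l := List.ofFn fun i : Fin n => Fml.iff (Fml.var (i : ℕ)) (ε (i : ℕ)) with hl
    have hC : Deriv L {bigAnd l} (bigAnd l) := .hyp rfl
    have hiff : Deriv L {bigAnd l} (Fml.iff A (A.subst ε)) := by
      apply Deriv.subst_iff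
      intro x hx
      refine Deriv.bigAnd_elim l hC _ ?_
      rw [hl, List.mem_ofFn]
      exact ⟨⟨x, hA x hx⟩, rfl⟩
    exact .mp (Deriv.iff_mpr hiff) (.thm hεu)
end
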